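/- Let h : X → Y be a homeomorphism between Smale spaces (X,φ) and (Y,ψ) with h∘φ = ψ^ε∘h, where ε ∈ {1,−1}. Then the map η : (x,z) ∈ G_φ^a ↦ (h(x),h(z)) ∈ G_ψ^a is an isomorphism of étale groupoids, and the map φ̃ : (x,n,z) ∈ G_φ^a⋊ℤ ↦ (h(x), ε·n, h(z)) ∈ G_ψ^a⋊ℤ is an isomorphism of étale groupoids. In particular, G_φ^a ≅ G_ψ^a and G_φ^a⋊ℤ ≅ G_ψ^a⋊ℤ as étale groupoids. -/

import Mathlib

open Filter Set Topology

noncomputable section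

/-- Integer iterate of a homeomorphism. -/
def hIter {X : Type*} [TopologicalSpace X] (φ : X ≃ₜ X) (n : ℤ) (x : X) : X :=
  ((φ.toEquiv : Equiv.Perm X) ^ n) x

/-- The cocycle sums `f^n` of a function `f : X → ℤ` along the iterates of `φ`:
`f^n(x) = Σ_{i=0}^{n-1} f(φ^i(x))` for `n > 0`, `f^0 = 0`, and
`f^n(x) = −Σ_{i=n}^{-1} f(φ^i(x))` for `n < 0`. -/
def cSum {X : Type*} [TopologicalSpace X] (φ : X ≃ₜ X) (f : X → ℤ) (n : ℤ) (x : X) : ℤ :=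
  if 0 ≤ n then ∑ i ∈ Finset.range n.toNat, f (hIter φ i x)
  else -∑ i ∈ Finset.range (-n).toNat, f (hIter φ (n + i) x)

/-- Stable asymptotic pairs (limit definition). -/
def asympS {X : Type*} [MetricSpace X] (φ : X ≃ₜ X) : Set (X × X) :=
  {p | Tendsto (fun n : ℕ => dist (hIter φ n p.1) (hIter φ n p.2)) atTop (nhds 0)}

/-- Unstable asymptotic pairs (limit definition). -/
def asympU {X : Type*} [MetricSpace X] (φ : X ≃ₜ X) : Set (X × X) :=
  {p | Tendsto (fun n : ℕ => dist (hIter φ (-(n : ℤ)) p.1) (hIter φ (-(n : ℤ)) p.2))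
    atTop (nhds 0)}

/-- Asymptotic pairs (limit definition). -/
def asympA {X : Type*} [MetricSpace X] (φ : X ≃ₜ X) : Set (X × X) := asympS φ ∩ asympU φ

/-- The `ω`-limit set of `x`. -/
def omegaSet {X : Type*} [MetricSpace X] (φ : X ≃ₜ X) (x : X) : Set X :=
  {z | ∃ n : ℕ → ℕ, StrictMono n ∧ Tendsto (fun i => hIter φ (n i) x) atTop (nhds z)}

/-- The `α`-limit set of `x`. -/
def alphaSet {X : Type*} [MetricSpace X] (φ : X ≃ₜ X) (x : X) : Set X :=
  {z | ∃ n : ℕ → ℤ, StrictAnti n ∧ Tendsto (fun i => hIter φ (n i) x) atTop (nhds z)}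

/-- A Smale space structure on a compact metric space `X`. -/
structure SmaleSpace (X : Type*) [MetricSpace X] [CompactSpace X] where
  phi : X ≃ₜ X
  eps : ℝ
  lam : ℝ
  br : X → X → X
  eps_pos : 0 < eps
  lam_pos : 0 < lam
  lam_lt_one : lam < 1
  br_cont : ContinuousOn (fun p : X × X => br p.1 p.2) {p : X × X | dist p.1 p.2 < eps}
  br_self : ∀ x : X, br x x = x
  br_assoc_left : ∀ x y z : X, dist x y < eps → dist (br x y) z < eps → dist x z < eps →
    br (br x y) z = br x z
  br_assoc_right : ∀ x y z : X, dist y z < eps → dist x (br y z) < eps → dist x z < eps →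
    br x (br y z) = br x z
  phi_br : ∀ x y : X, dist x y < eps → dist (phi x) (phi y) < eps →
    phi (br x y) = br (phi x) (phi y)
  contract_s : ∀ x y z : X, br y x = y → dist x y < eps → br z x = z → dist x z < eps →
    dist (phi y) (phi z) ≤ lam * dist y z
  contract_u : ∀ x y z : X, br x y = y → dist x y < eps → br x z = z → dist x z < eps →
    dist (phi.symm y) (phi.symm z) ≤ lam * dist y z

namespace SmaleSpace

variable {X Y : Type*} [MetricSpace X] [CompactSpace X] [MetricSpace Y] [CompactSpace Y]

/-- Local stable set `X^s(x,ε)`. -/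
def Xs (S : SmaleSpace X) (x : X) (ε : ℝ) : Set X := {y | S.br y x = y ∧ dist x y < ε}

/-- Local unstable set `X^u(x,ε)`. -/
def Xu (S : SmaleSpace X) (x : X) (ε : ℝ) : Set X := {y | S.br x y = y ∧ dist x y < ε}

def Gs0 (S : SmaleSpace X) : Set (X × X) := {p | p.2 ∈ S.Xs p.1 S.eps}

def Gu0 (S : SmaleSpace X) : Set (X × X) := {p | p.2 ∈ S.Xu p.1 S.eps}

/-- `G_φ^{s,n} = (φ×φ)^{-n}(G_φ^{s,0})`. -/
def GsN (S : SmaleSpace X) (n : ℤ) : Set (X × X) :=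
  {p | (hIter S.phi n p.1, hIter S.phi n p.2) ∈ S.Gs0}

/-- `G_φ^{u,n} = (φ×φ)^{n}(G_φ^{u,0})`. -/
def GuN (S : SmaleSpace X) (n : ℤ) : Set (X × X) :=
  {p | (hIter S.phi (-n) p.1, hIter S.phi (-n) p.2) ∈ S.Gu0}

def GaN (S : SmaleSpace X) (n : ℤ) : Set (X × X) := S.GsN n ∩ S.GuN n

/-- The asymptotic equivalence relation `G_φ^a = ⋃_{n ≥ 0} G_φ^{a,n}`. -/
def Ga (S : SmaleSpace X) : Set (X × X) := ⋃ n : ℕ, S.GaN n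

lemma gaN_subset_ga (S : SmaleSpace X) (n : ℕ) : S.GaN n ⊆ S.Ga :=
  Set.subset_iUnion (fun k : ℕ => S.GaN k) n

/-- The inductive limit topology on `G_φ^a`: a set is open iff its intersection with each
`G_φ^{a,n}` is open in the subspace topology from `X × X`. -/
def gaTopology (S : SmaleSpace X) : TopologicalSpace ↥S.Ga :=
  ⨆ n : ℕ, TopologicalSpace.coinduced (Set.inclusion (S.gaN_subset_ga n)) inferInstance

/-- Irreducibility of a Smale space. -/
def Irreducible (S : SmaleSpace X) : Prop :=
  ∀ U V : Set X, IsOpen U → U.Nonempty → IsOpen V → V.Nonempty →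
    ∃ K : ℕ, ((hIter S.phi K '' U) ∩ V).Nonempty

def IsPeriodicPoint (S : SmaleSpace X) (x : X) : Prop :=
  ∃ p : ℕ, 0 < p ∧ hIter S.phi p x = x

/-- `h` is a flip conjugacy between `(X,φ)` and `(Y,ψ)`. -/
def IsFlipConjugacy (S : SmaleSpace X) (T : SmaleSpace Y) (h : X ≃ₜ Y) : Prop :=
  (∀ x, h (S.phi x) = T.phi (h x)) ∨ (∀ x, h (S.phi x) = T.phi.symm (h x))

def FlipConjugate (S : SmaleSpace X) (T : SmaleSpace Y) : Prop :=
  ∃ h : X ≃ₜ Y, IsFlipConjugacy S T h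

/-- An isomorphism of the principal étale groupoids `G_φ^a` and `G_ψ^a`:
a bijection which is a homeomorphism for the inductive limit topologies and preserves
the (equivalence relation) groupoid structure. -/
structure GaIso (S : SmaleSpace X) (T : SmaleSpace Y) where
  toEquiv : ↥S.Ga ≃ ↥T.Ga
  cont : @Continuous _ _ S.gaTopology T.gaTopology toEquiv
  cont_symm : @Continuous _ _ T.gaTopology S.gaTopology toEquiv.symm
  map_mul : ∀ p q r : ↥S.Ga, (p : X × X).2 = (q : X × X).1 →
    (r : X × X) = ((p : X × X).1, (q : X × X).2) →
    (toEquiv p : Y × Y).2 = (toEquiv q : Y × Y).1 ∧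
      (toEquiv r : Y × Y) = ((toEquiv p : Y × Y).1, (toEquiv q : Y × Y).2)

end SmaleSpace

section hIterLemmas

variable {Z : Type*} [TopologicalSpace Z]

lemma hIter_add (φ : Z ≃ₜ Z) (m n : ℤ) (x : Z) :
    hIter φ (m + n) x = hIter φ m (hIter φ n x) := by
  simp [hIter, zpow_add, Equiv.Perm.mul_apply]

lemma hIter_zero (φ : Z ≃ₜ Z) (x : Z) : hIter φ 0 x = x := by
  simp [hIter]

lemma hIter_one (φ : Z ≃ₜ Z) (x : Z) : hIter φ 1 x = φ x := by
  simp [hIter]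

lemma hIter_neg_one (φ : Z ≃ₜ Z) (x : Z) : hIter φ (-1) x = φ.symm x := by
  show (φ.toEquiv ^ (-1 : ℤ)) x = φ.symm x
  rw [zpow_neg_one]
  rfl

lemma hIter_succ (φ : Z ≃ₜ Z) (n : ℤ) (x : Z) :
    hIter φ (n + 1) x = φ (hIter φ n x) := by
  rw [add_comm, hIter_add, hIter_one]

lemma hIter_sub_one (φ : Z ≃ₜ Z) (n : ℤ) (x : Z) :
    hIter φ (n - 1) x = φ.symm (hIter φ n x) := by
  rw [sub_eq_neg_add, hIter_add, hIter_neg_one]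

end hIterLemmas

namespace SmaleSpace

variable {X Y : Type*} [MetricSpace X] [CompactSpace X] [MetricSpace Y] [CompactSpace Y]

lemma gsN_mono_succ (S : SmaleSpace X) (n : ℤ) : S.GsN n ⊆ S.GsN (n + 1) := by
  rintro ⟨x, z⟩ hp
  obtain ⟨hbr, hd⟩ : S.br (hIter S.phi n z) (hIter S.phi n x) = hIter S.phi n z ∧
      dist (hIter S.phi n x) (hIter S.phi n z) < S.eps := hp
  set a := hIter S.phi n x with ha
  set b := hIter S.phi n z with hb
  have h1 : dist (S.phi b) (S.phi a) ≤ S.lam * dist b a :=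
    S.contract_s a b a hbr hd (S.br_self a) (by simpa using S.eps_pos)
  have h2 : dist (S.phi b) (S.phi a) < S.eps := by
    have hba : dist b a < S.eps := by rwa [dist_comm]
    nlinarith [dist_nonneg (x := b) (y := a), S.lam_lt_one, S.lam_pos]
  have h3 : S.phi (S.br b a) = S.br (S.phi b) (S.phi a) :=
    S.phi_br b a (by rwa [dist_comm]) h2
  constructor
  · show S.br (hIter S.phi (n + 1) z) (hIter S.phi (n + 1) x) = hIter S.phi (n + 1) z
    rw [hIter_succ, hIter_succ, ← ha, ← hb, ← h3, hbr]
  · show dist (hIter S.phi (n + 1) x) (hIter S.phi (n + 1) z) < S.eps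
    rw [hIter_succ, hIter_succ, ← ha, ← hb, dist_comm]
    exact h2

lemma guN_mono_succ (S : SmaleSpace X) (n : ℤ) : S.GuN n ⊆ S.GuN (n + 1) := by
  rintro ⟨x, z⟩ hp
  obtain ⟨hbr, hd⟩ : S.br (hIter S.phi (-n) x) (hIter S.phi (-n) z) = hIter S.phi (-n) z ∧
      dist (hIter S.phi (-n) x) (hIter S.phi (-n) z) < S.eps := hp
  set a := hIter S.phi (-n) x with ha
  set b := hIter S.phi (-n) z with hb
  have h1 : dist (S.phi.symm b) (S.phi.symm a) ≤ S.lam * dist b a :=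
    S.contract_u a b a hbr hd (S.br_self a) (by simpa using S.eps_pos)
  have h2 : dist (S.phi.symm a) (S.phi.symm b) < S.eps := by
    rw [dist_comm]
    have hba : dist b a < S.eps := by rwa [dist_comm] at hd
    nlinarith [dist_nonneg (x := b) (y := a), S.lam_lt_one, S.lam_pos]
  have h3 : S.phi (S.br (S.phi.symm a) (S.phi.symm b)) = S.br a b := by
    have := S.phi_br (S.phi.symm a) (S.phi.symm b) h2
      (by rw [Homeomorph.apply_symm_apply, Homeomorph.apply_symm_apply]; exact hd)
    rw [this, Homeomorph.apply_symm_apply, Homeomorph.apply_symm_apply]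
  have h4 : S.br (S.phi.symm a) (S.phi.symm b) = S.phi.symm b := by
    have := congrArg S.phi.symm h3
    rwa [Homeomorph.symm_apply_apply, hbr] at this
  have hiter : ∀ w : X, hIter S.phi (-(n + 1)) w = S.phi.symm (hIter S.phi (-n) w) := by
    intro w
    have : (-(n + 1) : ℤ) = -n - 1 := by ring
    rw [this, hIter_sub_one]
  constructor
  · show S.br (hIter S.phi (-(n + 1)) x) (hIter S.phi (-(n + 1)) z) = hIter S.phi (-(n + 1)) z
    rw [hiter, hiter, ← ha, ← hb, h4]
  · show dist (hIter S.phi (-(n + 1)) x) (hIter S.phi (-(n + 1)) z) < S.eps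
    rw [hiter, hiter, ← ha, ← hb]
    exact h2

set_option maxHeartbeats 1000000 in
lemma gsN_mono (S : SmaleSpace X) : ∀ {m n : ℤ}, m ≤ n → S.GsN m ⊆ S.GsN n := by
  intro m n h
  obtain ⟨k, rfl⟩ := Int.le.dest h
  induction k with
  | zero => simp
  | succ k ih =>
    have h2 : m + (↑(k + 1) : ℤ) = (m + ↑k) + 1 := by push_cast; ring
    rw [h2]
    exact (ih (by omega)).trans (S.gsN_mono_succ (m + ↑k))

set_option maxHeartbeats 1000000 in
lemma guN_mono (S : SmaleSpace X) : ∀ {m n : ℤ}, m ≤ n → S.GuN m ⊆ S.GuN n := by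
  intro m n h
  obtain ⟨k, rfl⟩ := Int.le.dest h
  induction k with
  | zero => simp
  | succ k ih =>
    have h2 : m + (↑(k + 1) : ℤ) = (m + ↑k) + 1 := by push_cast; ring
    rw [h2]
    exact (ih (by omega)).trans (S.guN_mono_succ (m + ↑k))

lemma mem_gsN_hIter (S : SmaleSpace X) (k m : ℤ) (x z : X) :
    (hIter S.phi m x, hIter S.phi m z) ∈ S.GsN k ↔ (x, z) ∈ S.GsN (k + m) := by
  simp only [GsN, Set.mem_setOf_eq, hIter_add]

lemma mem_guN_hIter (S : SmaleSpace X) (k m : ℤ) (x z : X) :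
    (hIter S.phi m x, hIter S.phi m z) ∈ S.GuN k ↔ (x, z) ∈ S.GuN (k - m) := by
  have e : ∀ w : X, hIter S.phi (-(k - m)) w = hIter S.phi (-k) (hIter S.phi m w) := by
    intro w
    rw [← hIter_add]
    congr 1
    ring
  simp only [GuN, Set.mem_setOf_eq, e]

lemma ga_shift (S : SmaleSpace X) (m : ℤ) {x z : X} (h : (x, z) ∈ S.Ga) :
    (hIter S.phi m x, hIter S.phi m z) ∈ S.Ga := by
  obtain ⟨k, hk⟩ := Set.mem_iUnion.1 h
  obtain ⟨hs, hu⟩ := hk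
  refine Set.mem_iUnion.2 ⟨k + m.natAbs, ?_, ?_⟩
  · rw [mem_gsN_hIter]
    exact S.gsN_mono (by omega) hs
  · rw [mem_guN_hIter]
    exact S.guN_mono (by omega) hu

/-- The semidirect product groupoid `G_φ^a ⋊ ℤ` as a subset of `X × ℤ × X`. -/
def GaZ (S : SmaleSpace X) : Set (X × ℤ × X) :=
  {q | (hIter S.phi q.2.1 q.1, q.2.2) ∈ S.Ga}

lemma gaZ_gamma_mem (S : SmaleSpace X) {q : X × ℤ × X} (hq : q ∈ S.GaZ) :
    (q.1, hIter S.phi (-q.2.1) q.2.2) ∈ S.Ga := by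
  have h := S.ga_shift (-q.2.1) hq
  rwa [← hIter_add, neg_add_cancel, hIter_zero] at h

/-- The map `γ(x,n,y) = ((x, φ^{-n}(y)), n)` from `G_φ^a ⋊ ℤ` to `G_φ^a × ℤ`. -/
def gaZGamma (S : SmaleSpace X) (q : ↥S.GaZ) : ↥S.Ga × ℤ :=
  (⟨((q : X × ℤ × X).1, hIter S.phi (-(q : X × ℤ × X).2.1) (q : X × ℤ × X).2.2),
    S.gaZ_gamma_mem q.2⟩, (q : X × ℤ × X).2.1)

/-- The topology on `G_φ^a ⋊ ℤ` making `γ` a homeomorphism onto `G_φ^a × ℤ`. -/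
def gaZTopology (S : SmaleSpace X) : TopologicalSpace ↥S.GaZ :=
  letI := S.gaTopology
  TopologicalSpace.induced S.gaZGamma inferInstance

/-- The canonical cocycle `d_φ : G_φ^a ⋊ ℤ → ℤ`, `d_φ(x,n,z) = n`. -/
def dMap (S : SmaleSpace X) (q : ↥S.GaZ) : ℤ := (q : X × ℤ × X).2.1

/-- An isomorphism of the étale groupoids `G_φ^a ⋊ ℤ` and `G_ψ^a ⋊ ℤ`: a bijection which
is a homeomorphism and preserves the groupoid structure (composability and products). -/
structure GaZIso (S : SmaleSpace X) (T : SmaleSpace Y) where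
  toEquiv : ↥S.GaZ ≃ ↥T.GaZ
  cont : @Continuous _ _ S.gaZTopology T.gaZTopology toEquiv
  cont_symm : @Continuous _ _ T.gaZTopology S.gaZTopology toEquiv.symm
  map_mul : ∀ g g' gp : ↥S.GaZ,
    (g : X × ℤ × X).2.2 = (g' : X × ℤ × X).1 →
    (gp : X × ℤ × X) = ((g : X × ℤ × X).1,
      (g : X × ℤ × X).2.1 + (g' : X × ℤ × X).2.1, (g' : X × ℤ × X).2.2) →
    (toEquiv g : Y × ℤ × Y).2.2 = (toEquiv g' : Y × ℤ × Y).1 ∧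
      (toEquiv gp : Y × ℤ × Y) = ((toEquiv g : Y × ℤ × Y).1,
        (toEquiv g : Y × ℤ × Y).2.1 + (toEquiv g' : Y × ℤ × Y).2.1,
        (toEquiv g' : Y × ℤ × Y).2.2)

end SmaleSpace

/-!
A conjugacy `h` with `h ∘ φ = ψ^ε ∘ h` intertwines `φ^j` with `ψ^(ε j)`; as `|ε j| = |j|`, it
maps pairs whose iterates are close in both time directions to such pairs (for `ε = -1` stable
and unstable directions are exchanged, which `G^a` does not see). The point is uniformity in the
level: on `G_φ^{a,n}` the iterates of order `|j| ≥ n + k` are `λ^k ε_X`-close, by uniform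
continuity of `h` their images are `δ`-close, and expansiveness of `(Y, ψ)` (a pair whose forward,
resp. backward, iterates stay `δ`-close is locally stably, resp. unstably, related) puts the image
pair into `G_ψ^{a,n+k}`. So `h × h` maps each level continuously into a level, which is continuity
for the inductive limit topology; the same argument applies to `h⁻¹`, and `γ` transports both
isomorphisms to `G^a ⋊ ℤ`.
-/

section Semiconj

variable {Z W : Type*} [TopologicalSpace Z] [TopologicalSpace W]

lemma hIter_symm (φ : Z ≃ₜ Z) (k : ℤ) (x : Z) : hIter φ.symm k x = hIter φ (-k) x := by
  show ((φ.toEquiv⁻¹ : Equiv.Perm Z) ^ k) x = (φ.toEquiv ^ (-k)) x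
  rw [inv_zpow, ← zpow_neg]

lemma apply_hIter_of_semiconj {φ : Z ≃ₜ Z} {ψ : W ≃ₜ W} {h : Z → W} {ε : ℤ}
    (hconj : ∀ x, h (φ x) = hIter ψ ε (h x)) (k : ℤ) (x : Z) :
    h (hIter φ k x) = hIter ψ (ε * k) (h x) := by
  induction k using Int.induction_on generalizing x with
  | zero => simp only [hIter_zero, mul_zero]
  | succ k ih => rw [hIter_succ, hconj, ih, ← hIter_add, mul_add_one, add_comm]
  | pred k ih =>
    apply (ψ.toEquiv ^ ε).injective
    change hIter ψ ε _ = hIter ψ ε _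
    rw [← hconj, ← hIter_one φ, ← hIter_add, ← hIter_add, show (1 : ℤ) + (-k - 1) = -k by ring,
      ih]
    congr 1
    ring

lemma symm_apply_of_semiconj {φ : Z ≃ₜ Z} {ψ : W ≃ₜ W} {h : Z ≃ₜ W} {ε : ℤ} (hε : ε * ε = 1)
    (hconj : ∀ x, h (φ x) = hIter ψ ε (h x)) (y : W) :
    h.symm (ψ y) = hIter φ ε (h.symm y) := by
  apply h.injective
  rw [apply_hIter_of_semiconj hconj, hε, hIter_one, h.apply_symm_apply, h.apply_symm_apply]

end Semiconj

lemma Int.mul_left_involutive {ε : ℤ} (hε : IsUnit ε) : Function.Involutive (ε * ·) :=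
  fun n => by simp only [← mul_assoc, Int.isUnit_mul_self hε, one_mul]

lemma eq_of_forall_dist_le_pow_mul {M : Type*} [MetricSpace M] {r C : ℝ} (hr₀ : 0 ≤ r)
    (hr₁ : r < 1) {p q : M} (h : ∀ k : ℕ, dist p q ≤ r ^ k * C) : p = q := by
  have hlim : Tendsto (fun k : ℕ => r ^ k * C) atTop (𝓝 0) := by
    simpa using (tendsto_pow_atTop_nhds_zero_of_lt_one hr₀ hr₁).mul_const C
  exact dist_le_zero.1 (ge_of_tendsto' hlim h)

namespace SmaleSpace

variable {X Y : Type*} [MetricSpace X] [CompactSpace X] [MetricSpace Y] [CompactSpace Y]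

/-- Time reversal: it exchanges stable and unstable sets, so unstable statements follow from
stable ones. -/
def reverse (S : SmaleSpace X) : SmaleSpace X where
  phi := S.phi.symm
  eps := S.eps
  lam := S.lam
  br x y := S.br y x
  eps_pos := S.eps_pos
  lam_pos := S.lam_pos
  lam_lt_one := S.lam_lt_one
  br_cont := S.br_cont.comp continuous_swap.continuousOn fun p hp => by
    simpa [dist_comm] using hp
  br_self := S.br_self
  br_assoc_left x y z _ h₂ _ :=
    S.br_assoc_right z y x (by rwa [dist_comm]) (by rwa [dist_comm] at h₂) (by rwa [dist_comm])
  br_assoc_right x y z _ h₂ _ :=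
    S.br_assoc_left z y x (by rwa [dist_comm]) (by rwa [dist_comm] at h₂) (by rwa [dist_comm])
  phi_br x y h₁ h₂ := by
    apply S.phi.injective
    rw [S.phi_br _ _ (by rwa [dist_comm] at h₂) (by simpa [dist_comm] using h₁)]
    simp
  contract_s := S.contract_u
  contract_u x y z h₁ h₂ h₃ h₄ := by simpa using S.contract_s x y z h₁ h₂ h₃ h₄

variable (S : SmaleSpace X)

lemma hIter_reverse (k : ℤ) (x : X) : hIter S.reverse.phi k x = hIter S.phi (-k) x :=
  hIter_symm S.phi k x

lemma hIter_mem_gs0 {a b : X} (hab : (a, b) ∈ S.Gs0) (k : ℕ) :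
    (hIter S.phi k a, hIter S.phi k b) ∈ S.Gs0 := by
  have h0 : (a, b) ∈ S.GsN 0 := by
    show (hIter S.phi 0 a, hIter S.phi 0 b) ∈ S.Gs0
    rwa [hIter_zero, hIter_zero]
  exact S.gsN_mono (Nat.cast_nonneg k) h0

lemma dist_hIter_le_of_mem_gs0 {a b : X} (hab : (a, b) ∈ S.Gs0) (k : ℕ) :
    dist (hIter S.phi k a) (hIter S.phi k b) ≤ S.lam ^ k * dist a b := by
  induction k with
  | zero => simp [hIter_zero]
  | succ k ih =>
    obtain ⟨hbr, hd⟩ := S.hIter_mem_gs0 hab k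
    have hstep := S.contract_s _ _ _ hbr hd (S.br_self _) (by simpa using S.eps_pos)
    rw [Nat.cast_succ, hIter_succ, hIter_succ, dist_comm, pow_succ', mul_assoc]
    exact hstep.trans (mul_le_mul_of_nonneg_left (by rwa [dist_comm]) S.lam_pos.le)

lemma dist_hIter_neg_le_of_mem_gu0 {a b : X} (hab : (a, b) ∈ S.Gu0) (k : ℕ) :
    dist (hIter S.phi (-k) a) (hIter S.phi (-k) b) ≤ S.lam ^ k * dist a b := by
  have h := S.reverse.dist_hIter_le_of_mem_gs0 hab k
  rwa [hIter_reverse, hIter_reverse] at h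

lemma phi_mem_gu0 {a b : X} (hab : (a, b) ∈ S.Gu0) (hd : dist (S.phi a) (S.phi b) < S.eps) :
    (S.phi a, S.phi b) ∈ S.Gu0 :=
  ⟨by rw [← S.phi_br a b hab.2 hd, hab.1], hd⟩

/-- Expansiveness along an unstable set: backward contraction forces the points to coincide. -/
lemma eq_of_br_eq_of_forall_dist_hIter_lt {b w : X} (hbw : S.br b w = w)
    (hclose : ∀ k : ℕ, dist (hIter S.phi k b) (hIter S.phi k w) < S.eps) : b = w := by
  have hmem : ∀ k : ℕ, (hIter S.phi k b, hIter S.phi k w) ∈ S.Gu0 := by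
    intro k
    induction k with
    | zero =>
      have h0 := hclose 0
      rw [Nat.cast_zero, hIter_zero, hIter_zero] at h0 ⊢
      exact ⟨hbw, h0⟩
    | succ k ih =>
      have hk := hclose (k + 1)
      rw [Nat.cast_succ, hIter_succ, hIter_succ] at hk ⊢
      exact S.phi_mem_gu0 ih hk
  refine eq_of_forall_dist_le_pow_mul S.lam_pos.le S.lam_lt_one (C := S.eps) fun k => ?_
  have hback := S.dist_hIter_neg_le_of_mem_gu0 (hmem k) k
  simp only [← hIter_add, neg_add_cancel, hIter_zero] at hback
  exact hback.trans (by gcongr; exacts [pow_nonneg S.lam_pos.le k, (hclose k).le])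

lemma exists_dist_br_lt {ρ : ℝ} (hρ : 0 < ρ) :
    ∃ δ > 0, ∀ p q : X, dist p q < δ →
      dist (S.br p q) p < ρ ∧ dist (S.br p q) q < ρ := by
  set U : Set (X × X) := {p | dist p.1 p.2 < S.eps}
  set f : X × X → ℝ × ℝ := fun p => (dist (S.br p.1 p.2) p.1, dist (S.br p.1 p.2) p.2)
  have hf : ContinuousOn f U :=
    ((continuous_dist.comp_continuousOn (S.br_cont.prodMk continuousOn_fst))).prodMk
      (continuous_dist.comp_continuousOn (S.br_cont.prodMk continuousOn_snd))
  have hV : IsOpen (U ∩ f ⁻¹' (Iio ρ ×ˢ Iio ρ)) :=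
    hf.isOpen_inter_preimage (isOpen_lt (by fun_prop) continuous_const)
      (isOpen_Iio.prod isOpen_Iio)
  have hdiag : range (fun x : X => (x, x)) ⊆ U ∩ f ⁻¹' (Iio ρ ×ˢ Iio ρ) := by
    rintro _ ⟨x, rfl⟩
    simp [U, f, S.br_self, S.eps_pos, hρ]
  obtain ⟨δ, hδ, hsub⟩ :=
    (isCompact_range (by fun_prop)).exists_thickening_subset_open hV hdiag
  refine ⟨δ, hδ, fun p q hpq => ?_⟩
  have hmem : (p, q) ∈ Metric.thickening δ (range fun x : X => (x, x)) := by
    refine Metric.mem_thickening_iff.2 ⟨(p, p), ⟨p, rfl⟩, ?_⟩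
    rw [Prod.dist_eq, dist_self, dist_comm]
    exact max_lt hδ hpq
  exact (hsub hmem).2

/-- Shadowing: the stable member `[b, a]` of `X^s(a)` also lies in `X^u(b)`, and its forward
orbit stays close to that of `b`, so it equals `b`. -/
lemma exists_mem_gs0_of_forall_dist_hIter_lt :
    ∃ δ > 0, ∀ a b : X, (∀ k : ℕ, dist (hIter S.phi k a) (hIter S.phi k b) < δ) →
      (a, b) ∈ S.Gs0 := by
  have hε₂ : 0 < S.eps / 2 := half_pos S.eps_pos
  obtain ⟨δ, hδ, hbr⟩ := S.exists_dist_br_lt hε₂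
  refine ⟨min δ (S.eps / 2), lt_min hδ hε₂, fun a b hclose => ?_⟩
  have hab : dist b a < min δ (S.eps / 2) := by simpa [hIter_zero, dist_comm] using hclose 0
  have hba_eps : dist b a < S.eps :=
    (hab.trans_le (min_le_right _ _)).trans (half_lt_self S.eps_pos)
  obtain ⟨hwb, hwa⟩ := hbr b a (hab.trans_le (min_le_left _ _))
  set w := S.br b a
  have hwa_eps : dist w a < S.eps := hwa.trans (half_lt_self S.eps_pos)
  have hw_s : (a, w) ∈ S.Gs0 :=
    ⟨S.br_assoc_left b a a hba_eps hwa_eps hba_eps, by rwa [dist_comm]⟩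
  have hw_u : S.br b w = w :=
    S.br_assoc_right b b a hba_eps (by rw [dist_comm]; exact hwb.trans (half_lt_self S.eps_pos))
      hba_eps
  have hclose_w : ∀ k : ℕ, dist (hIter S.phi k b) (hIter S.phi k w) < S.eps := fun k =>
    calc dist (hIter S.phi k b) (hIter S.phi k w)
        ≤ dist (hIter S.phi k a) (hIter S.phi k b) + dist (hIter S.phi k a) (hIter S.phi k w) :=
          dist_triangle_left _ _ _
      _ < S.eps / 2 + S.eps / 2 := by
          gcongr
          · exact (hclose k).trans_le (min_le_right _ _)
          · calc dist (hIter S.phi k a) (hIter S.phi k w) ≤ S.lam ^ k * dist a w :=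
                  S.dist_hIter_le_of_mem_gs0 hw_s k
              _ ≤ 1 * dist a w := by
                  gcongr; exact pow_le_one₀ S.lam_pos.le S.lam_lt_one.le
              _ < S.eps / 2 := by rw [one_mul, dist_comm]; exact hwa
      _ = S.eps := add_halves _
  have hbw : b = w := S.eq_of_br_eq_of_forall_dist_hIter_lt hw_u hclose_w
  exact ⟨hbw.symm, by rwa [dist_comm]⟩

lemma exists_mem_gu0_of_forall_dist_hIter_neg_lt :
    ∃ δ > 0, ∀ a b : X, (∀ k : ℕ, dist (hIter S.phi (-k) a) (hIter S.phi (-k) b) < δ) →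
      (a, b) ∈ S.Gu0 := by
  obtain ⟨δ, hδ, hshadow⟩ := S.reverse.exists_mem_gs0_of_forall_dist_hIter_lt
  exact ⟨δ, hδ, fun a b hclose => hshadow a b (by simpa only [hIter_reverse] using hclose)⟩

lemma dist_hIter_lt_of_mem_gsN {n : ℤ} {x z : X} (hxz : (x, z) ∈ S.GsN n) (m : ℕ) :
    dist (hIter S.phi (m + n) x) (hIter S.phi (m + n) z) < S.lam ^ m * S.eps := by
  rw [hIter_add, hIter_add]
  exact (S.dist_hIter_le_of_mem_gs0 hxz m).trans_lt
    (mul_lt_mul_of_pos_left hxz.2 (pow_pos S.lam_pos m))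

lemma dist_hIter_lt_of_mem_guN {n : ℤ} {x z : X} (hxz : (x, z) ∈ S.GuN n) (m : ℕ) :
    dist (hIter S.phi (-m + -n) x) (hIter S.phi (-m + -n) z) < S.lam ^ m * S.eps := by
  rw [hIter_add, hIter_add]
  exact (S.dist_hIter_neg_le_of_mem_gu0 hxz m).trans_lt
    (mul_lt_mul_of_pos_left hxz.2 (pow_pos S.lam_pos m))

lemma exists_dist_hIter_lt_of_mem_gaN {δ : ℝ} (hδ : 0 < δ) :
    ∃ k : ℕ, ∀ (n : ℕ) (x z : X), (x, z) ∈ S.GaN n → ∀ j : ℤ, ((n + k : ℕ) : ℤ) ≤ |j| →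
      dist (hIter S.phi j x) (hIter S.phi j z) < δ := by
  have hlim : Tendsto (fun k : ℕ => S.lam ^ k * S.eps) atTop (𝓝 0) := by
    simpa using (tendsto_pow_atTop_nhds_zero_of_lt_one S.lam_pos.le S.lam_lt_one).mul_const S.eps
  obtain ⟨k, hk⟩ := (hlim.eventually (gt_mem_nhds hδ)).exists
  have hsmall : ∀ m : ℕ, k ≤ m → S.lam ^ m * S.eps < δ := fun m hm =>
    lt_of_le_of_lt (mul_le_mul_of_nonneg_right
      (pow_le_pow_of_le_one S.lam_pos.le S.lam_lt_one.le hm) S.eps_pos.le) hk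
  refine ⟨k, fun n x z hxz j hj => ?_⟩
  rcases le_or_gt 0 j with hj₀ | hj₀
  · rw [abs_of_nonneg hj₀] at hj
    obtain ⟨m, rfl⟩ : ∃ m : ℕ, j = m + n := ⟨(j - n).toNat, by omega⟩
    exact (S.dist_hIter_lt_of_mem_gsN hxz.1 m).trans (hsmall m (by omega))
  · rw [abs_of_neg hj₀] at hj
    obtain ⟨m, rfl⟩ : ∃ m : ℕ, j = -m + -n := ⟨(-j - n).toNat, by omega⟩
    exact (S.dist_hIter_lt_of_mem_guN hxz.2 m).trans (hsmall m (by omega))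

lemma exists_mem_gaN_of_dist_hIter_lt :
    ∃ δ > 0, ∀ (N : ℕ) (a b : X), (∀ j : ℤ, N ≤ |j| →
      dist (hIter S.phi j a) (hIter S.phi j b) < δ) → (a, b) ∈ S.GaN N := by
  obtain ⟨δs, hδs, hs⟩ := S.exists_mem_gs0_of_forall_dist_hIter_lt
  obtain ⟨δu, hδu, hu⟩ := S.exists_mem_gu0_of_forall_dist_hIter_neg_lt
  refine ⟨min δs δu, lt_min hδs hδu, fun N a b hclose => ⟨hs _ _ fun k => ?_, hu _ _ fun k => ?_⟩⟩
  · rw [← hIter_add, ← hIter_add]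
    exact (hclose _ (by rw [abs_of_nonneg (by omega)]; omega)).trans_le (min_le_left _ _)
  · rw [← hIter_add, ← hIter_add]
    exact (hclose _ (by rw [abs_of_nonpos (by omega)]; omega)).trans_le (min_le_right _ _)

section Conjugacy

variable {S} {T : SmaleSpace Y} {ε : ℤ}

lemma exists_mapsTo_gaN {h : X → Y} (hh : Continuous h) (hε : IsUnit ε)
    (hconj : ∀ x, h (S.phi x) = hIter T.phi ε (h x)) :
    ∃ k : ℕ, ∀ n : ℕ, MapsTo (Prod.map h h) (S.GaN n) (T.GaN ↑(n + k)) := by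
  obtain ⟨δT, hδT, hT⟩ := T.exists_mem_gaN_of_dist_hIter_lt
  obtain ⟨δX, hδX, hh_unif⟩ := Metric.uniformContinuous_iff.1
    (CompactSpace.uniformContinuous_of_continuous hh) δT hδT
  obtain ⟨k, hk⟩ := S.exists_dist_hIter_lt_of_mem_gaN hδX
  refine ⟨k, fun n ⟨x, z⟩ hxz => hT _ _ _ fun j hj => ?_⟩
  have hεj : ((n + k : ℕ) : ℤ) ≤ |ε * j| := by
    rwa [abs_mul, Int.isUnit_iff_abs_eq.1 hε, one_mul]
  have := hh_unif (hk n x z hxz (ε * j) hεj)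
  rwa [apply_hIter_of_semiconj hconj, apply_hIter_of_semiconj hconj, ← mul_assoc,
    Int.isUnit_mul_self hε, one_mul] at this

lemma mapsTo_ga {h : X → Y} (hh : Continuous h) (hε : IsUnit ε)
    (hconj : ∀ x, h (S.phi x) = hIter T.phi ε (h x)) :
    MapsTo (Prod.map h h) S.Ga T.Ga := by
  obtain ⟨k, hk⟩ := exists_mapsTo_gaN hh hε hconj
  intro p hp
  obtain ⟨n, hn⟩ := mem_iUnion.1 hp
  exact T.gaN_subset_ga _ (hk n hn)

lemma map_mem_ga_iff {h : X ≃ₜ Y} (hε : IsUnit ε)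
    (hconj : ∀ x, h (S.phi x) = hIter T.phi ε (h x)) {x z : X} :
    (h x, h z) ∈ T.Ga ↔ (x, z) ∈ S.Ga := by
  refine ⟨fun hxz => ?_, fun hxz => mapsTo_ga h.continuous hε hconj hxz⟩
  simpa using mapsTo_ga h.symm.continuous hε
    (symm_apply_of_semiconj (Int.isUnit_mul_self hε) hconj) hxz

lemma hIter_mem_ga_iff {h : X ≃ₜ Y} (hε : IsUnit ε)
    (hconj : ∀ x, h (S.phi x) = hIter T.phi ε (h x)) {n : ℤ} {x z : X} :
    (hIter T.phi (ε * n) (h x), h z) ∈ T.Ga ↔ (hIter S.phi n x, z) ∈ S.Ga := by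
  rw [← apply_hIter_of_semiconj hconj]
  exact map_mem_ga_iff hε hconj

lemma continuous_inclusion_gaN (n : ℕ) :
    Continuous[_, S.gaTopology] (inclusion (S.gaN_subset_ga n)) :=
  continuous_iSup_rng (i := n) continuous_coinduced_rng

lemma continuous_of_mapsTo_gaN {f : X × X → Y × Y} (hf : Continuous f) {k : ℕ}
    (hmaps : ∀ n : ℕ, MapsTo f (S.GaN n) (T.GaN ↑(n + k))) {F : S.Ga → T.Ga}
    (hF : ∀ p, (F p : Y × Y) = f p) :
    Continuous[S.gaTopology, T.gaTopology] F := by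
  refine (continuous_iSup_dom (t₂ := T.gaTopology)).2 fun n =>
    (continuous_coinduced_dom (t₂ := T.gaTopology)).2 ?_
  have hcomm : F ∘ inclusion (S.gaN_subset_ga n)
      = inclusion (T.gaN_subset_ga (n + k)) ∘ (hmaps n).restrict :=
    funext fun p => Subtype.ext (hF _)
  rw [hcomm]
  -- so that `Continuous.comp` puts the inductive limit topology, not the subspace one, on `T.Ga`
  let _ := T.gaTopology
  exact (continuous_inclusion_gaN (n + k)).comp (hf.restrict (hmaps n))

lemma continuous_of_gaZGamma_eq {E : S.Ga → T.Ga}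
    (hE : Continuous[S.gaTopology, T.gaTopology] E) (c : ℤ → ℤ) {F : S.GaZ → T.GaZ}
    (hF : ∀ q, T.gaZGamma (F q) = Prod.map E c (S.gaZGamma q)) :
    Continuous[S.gaZTopology, T.gaZTopology] F := by
  let _ := S.gaTopology
  let _ := T.gaTopology
  let _ := S.gaZTopology
  have hcomm : T.gaZGamma ∘ F = Prod.map E c ∘ S.gaZGamma := funext hF
  refine (continuous_induced_rng (t₁ := S.gaZTopology)).2 ?_
  rw [hcomm]
  exact (hE.prodMap continuous_of_discreteTopology).comp continuous_induced_dom

lemma continuous_gaZ_of_coe_eq {h : X → Y} (hconj : ∀ x, h (S.phi x) = hIter T.phi ε (h x))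
    {E : S.Ga → T.Ga} (hE : Continuous[S.gaTopology, T.gaTopology] E)
    (hEh : ∀ p, (E p : Y × Y) = Prod.map h h p) {F : S.GaZ → T.GaZ}
    (hFh : ∀ q, (F q : Y × ℤ × Y) = (h q.1.1, ε * q.1.2.1, h q.1.2.2)) :
    Continuous[S.gaZTopology, T.gaZTopology] F := by
  refine continuous_of_gaZGamma_eq hE (ε * ·) fun q => ?_
  refine Prod.ext (Subtype.ext ?_) (congrArg (·.2.1) (hFh q))
  simp only [gaZGamma, Prod.map_apply, hEh, hFh, apply_hIter_of_semiconj hconj, mul_neg]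

def GaIso.ofConjugacy (h : X ≃ₜ Y) (hε : IsUnit ε)
    (hconj : ∀ x, h (S.phi x) = hIter T.phi ε (h x)) : GaIso S T where
  toEquiv := (h.toEquiv.prodCongr h.toEquiv).subtypeEquiv fun _ =>
    (map_mem_ga_iff hε hconj).symm
  cont := by
    obtain ⟨k, hk⟩ := exists_mapsTo_gaN h.continuous hε hconj
    exact continuous_of_mapsTo_gaN (h.continuous.prodMap h.continuous) hk fun _ => rfl
  cont_symm := by
    obtain ⟨k, hk⟩ := exists_mapsTo_gaN h.symm.continuous hε
      (symm_apply_of_semiconj (Int.isUnit_mul_self hε) hconj)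
    exact continuous_of_mapsTo_gaN (h.symm.continuous.prodMap h.symm.continuous) hk fun _ => rfl
  map_mul _ _ _ hpq hr := ⟨congrArg h hpq, congrArg (Prod.map h h) hr⟩

/-- The isomorphism `(x, n, z) ↦ (h x, ε n, h z)` of the semidirect product groupoids. -/
def GaZIso.ofConjugacy (h : X ≃ₜ Y) (hε : IsUnit ε)
    (hconj : ∀ x, h (S.phi x) = hIter T.phi ε (h x)) : GaZIso S T where
  toEquiv :=
    (h.toEquiv.prodCongr ((Int.mul_left_involutive hε).toPerm.prodCongr h.toEquiv)).subtypeEquiv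
      fun _ => (hIter_mem_ga_iff hε hconj).symm
  cont := continuous_gaZ_of_coe_eq hconj (GaIso.ofConjugacy h hε hconj).cont (fun _ => rfl)
    fun _ => rfl
  cont_symm := continuous_gaZ_of_coe_eq (symm_apply_of_semiconj (Int.isUnit_mul_self hε) hconj)
    (GaIso.ofConjugacy h hε hconj).cont_symm (fun _ => rfl) fun _ => rfl
  map_mul g g' gp hgg' hgp := by
    refine ⟨congrArg h hgg', ?_⟩
    change (h gp.1.1, ε * gp.1.2.1, h gp.1.2.2)
      = (h g.1.1, ε * g.1.2.1 + ε * g'.1.2.1, h g'.1.2.2)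
    rw [hgp, mul_add]

end Conjugacy

end SmaleSpace

/-- A conjugacy `h∘φ = ψ^ε∘h` (`ε = ±1`) induces isomorphisms of étale
groupoids `η : G_φ^a → G_ψ^a`, `(x,z) ↦ (h(x),h(z))`, and
`φ̃ : G_φ^a⋊ℤ → G_ψ^a⋊ℤ`, `(x,n,z) ↦ (h(x), εn, h(z))`; in particular
`G_φ^a ≅ G_ψ^a` and `G_φ^a⋊ℤ ≅ G_ψ^a⋊ℤ`. -/
theorem conjugacy_induces_groupoid_isos {X Y : Type*} [MetricSpace X] [CompactSpace X]
    [MetricSpace Y] [CompactSpace Y] (S : SmaleSpace X) (T : SmaleSpace Y)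
    (h : X ≃ₜ Y) (ε : ℤ) (hε : ε = 1 ∨ ε = -1)
    (hconj : ∀ x : X, h (S.phi x) = hIter T.phi ε (h x)) :
    (∃ E : SmaleSpace.GaIso S T, ∀ p : ↥S.Ga,
      (E.toEquiv p : Y × Y) = (h (p : X × X).1, h (p : X × X).2)) ∧
    (∃ F : SmaleSpace.GaZIso S T, ∀ g : ↥S.GaZ,
      (F.toEquiv g : Y × ℤ × Y)
        = (h (g : X × ℤ × X).1, ε * (g : X × ℤ × X).2.1, h (g : X × ℤ × X).2.2)) ∧
    Nonempty (SmaleSpace.GaIso S T) ∧ Nonempty (SmaleSpace.GaZIso S T) := by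
  have hunit : IsUnit ε := Int.isUnit_iff.2 hε
  let E := SmaleSpace.GaIso.ofConjugacy h hunit hconj
  let F := SmaleSpace.GaZIso.ofConjugacy h hunit hconj
  exact ⟨⟨E, fun _ => rfl⟩, ⟨F, fun _ => rfl⟩, ⟨E⟩, ⟨F⟩⟩
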